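/- Let $R$ be a ring with subring $S$, $n = r + s$, and $w_1 \in S_r$, $w_2 \in S_s$ permutation matrices. Suppose $A_1 \in M_r(S)$, $A_2 \in M_s(S)$, $B \in M_{s\times r}(R)$ satisfy: (i) $w_i^{-1} A_i w_i$ is lower triangular for $i=1,2$; (ii) for every diagonal entry $s_1$ of $A_1$ and $s_2$ of $A_2$, $s_1 - s_2 \in S^\times$; (iii) $BA_1 - A_2 B \in M_{s\times r}(S)$. Then $B \in M_{s\times r}(S)$. -/
import Mathlib


/-- Lemma `invertible_operator`: let `R` be a commutative ring
with subring `S`, `n = r + s`, `w₁ ∈ S_r`, `w₂ ∈ S_s` permutations.  Suppose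
`A₁ ∈ M_r(S)`, `A₂ ∈ M_s(S)` become lower triangular after conjugation by the
permutation matrices of `w₁`, `w₂`, that every difference of a diagonal entry
of `A₁` and a diagonal entry of `A₂` is a unit of `S`, and that
`B A₁ - A₂ B` has entries in `S` for `B ∈ M_{s×r}(R)`.  Then `B ∈ M_{s×r}(S)`. -/
theorem invertible_operator {R : Type*} [CommRing R] (S : Subring R) (r s : ℕ)
    (w1 : Equiv.Perm (Fin r)) (w2 : Equiv.Perm (Fin s))
    (A1 : Matrix (Fin r) (Fin r) R) (A2 : Matrix (Fin s) (Fin s) R)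
    (B : Matrix (Fin s) (Fin r) R)
    (hA1S : ∀ i j, A1 i j ∈ S) (hA2S : ∀ i j, A2 i j ∈ S)
    (hA1tri : ∀ i j : Fin r, i < j → A1 (w1 i) (w1 j) = 0)
    (hA2tri : ∀ i j : Fin s, i < j → A2 (w2 i) (w2 j) = 0)
    (hunit : ∀ (i : Fin r) (j : Fin s), ∃ u : Sˣ, (u : R) = A1 i i - A2 j j)
    (hcomm : ∀ i j, (B * A1 - A2 * B) i j ∈ S) :
    ∀ i j, B i j ∈ S := by
  suffices h : ∀ m : ℕ, ∀ (i : Fin s) (j : Fin r), i.val + (r - j.val) ≤ m →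
      B (w2 i) (w1 j) ∈ S by
    intro i j
    have := h (s + r) (w2.symm i) (w1.symm j) (by omega)
    simpa using this
  intro m
  induction m with
  | zero =>
    intro i j hij
    have := j.isLt
    omega
  | succ m IH =>
    intro i j hij
    set T1 : R := ∑ k ∈ Finset.univ.filter (fun k : Fin r => j < k),
        B (w2 i) (w1 k) * A1 (w1 k) (w1 j) with hT1
    set T2 : R := ∑ k ∈ Finset.univ.filter (fun k : Fin s => k < i),
        A2 (w2 i) (w2 k) * B (w2 k) (w1 j) with hT2
    have h1 : (B * A1) (w2 i) (w1 j)
        = B (w2 i) (w1 j) * A1 (w1 j) (w1 j) + T1 := by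
      rw [Matrix.mul_apply]
      rw [← Equiv.sum_comp w1 (fun k => B (w2 i) k * A1 k (w1 j))]
      rw [← Finset.add_sum_erase _ _ (Finset.mem_univ j)]
      congr 1
      rw [hT1]
      refine (Finset.sum_subset ?_ ?_).symm
      · intro k hk
        simp only [Finset.mem_filter, Finset.mem_univ, true_and] at hk
        simp [Finset.mem_erase, hk.ne']
      · intro k hk hk'
        simp only [Finset.mem_erase, Finset.mem_univ, and_true] at hk
        simp only [Finset.mem_filter, Finset.mem_univ, true_and] at hk'
        have hkj : k < j := lt_of_le_of_ne (not_lt.mp hk') hk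
        rw [hA1tri k j hkj, mul_zero]
    have h2 : (A2 * B) (w2 i) (w1 j)
        = A2 (w2 i) (w2 i) * B (w2 i) (w1 j) + T2 := by
      rw [Matrix.mul_apply]
      rw [← Equiv.sum_comp w2 (fun k => A2 (w2 i) k * B k (w1 j))]
      rw [← Finset.add_sum_erase _ _ (Finset.mem_univ i)]
      congr 1
      rw [hT2]
      refine (Finset.sum_subset ?_ ?_).symm
      · intro k hk
        simp only [Finset.mem_filter, Finset.mem_univ, true_and] at hk
        simp [Finset.mem_erase, hk.ne]
      · intro k hk hk'
        simp only [Finset.mem_erase, Finset.mem_univ, and_true] at hk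
        simp only [Finset.mem_filter, Finset.mem_univ, true_and] at hk'
        have hik : i < k := lt_of_le_of_ne (not_lt.mp hk') (Ne.symm hk)
        rw [hA2tri i k hik, zero_mul]
    have key : B (w2 i) (w1 j) * (A1 (w1 j) (w1 j) - A2 (w2 i) (w2 i))
        = (B * A1 - A2 * B) (w2 i) (w1 j) - T1 + T2 := by
      have : (B * A1 - A2 * B) (w2 i) (w1 j)
          = (B * A1) (w2 i) (w1 j) - (A2 * B) (w2 i) (w1 j) := by
        simp [Matrix.sub_apply]
      rw [this, h1, h2]; ring
    obtain ⟨u, hu⟩ := hunit (w1 j) (w2 i)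
    have hT1S : T1 ∈ S := by
      refine Subring.sum_mem S ?_
      intro k hk
      simp only [Finset.mem_filter, Finset.mem_univ, true_and] at hk
      have hjk : j.val < k.val := hk
      have hkr := k.isLt
      exact S.mul_mem (IH i k (by omega)) (hA1S _ _)
    have hT2S : T2 ∈ S := by
      refine Subring.sum_mem S ?_
      intro k hk
      simp only [Finset.mem_filter, Finset.mem_univ, true_and] at hk
      have hki : k.val < i.val := hk
      exact S.mul_mem (hA2S _ _) (IH k j (by omega))
    have hRHS : (B * A1 - A2 * B) (w2 i) (w1 j) - T1 + T2 ∈ S :=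
      S.add_mem (S.sub_mem (hcomm _ _) hT1S) hT2S
    have hBeq : B (w2 i) (w1 j)
        = ((B * A1 - A2 * B) (w2 i) (w1 j) - T1 + T2) * ((u⁻¹ : Sˣ) : R) := by
      rw [← key, ← hu, mul_assoc]
      have : ((u : Sˣ) : R) * ((u⁻¹ : Sˣ) : R) = 1 := by
        rw [← Subring.coe_mul, ← Units.val_mul]; simp
      rw [this, mul_one]
    rw [hBeq]
    exact S.mul_mem hRHS (SetLike.coe_mem _)
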